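/- Let U ⊆ ℝ² be an open neighborhood of 0 and let f = (x,y,z,p,q) : U → ℝ⁵ be a smooth map whose total derivative Df(0) : ℝ² → ℝ⁵ is injective, and which satisfies the contact condition and the Hess = 1 condition on U. If the derivative at 0 of π₁∘f = (x,y,z) : U → ℝ³ is injective, or the derivative at 0 of π₂∘f = (p, q, p·x + q·y − z) : U → ℝ³ is injective, then both of these derivatives at 0 are injective. -/

import Mathlib

noncomputable section

/-- Partial derivative in the direction `(1,0)`. -/
def pu (g : ℝ × ℝ → ℝ) (a : ℝ × ℝ) : ℝ := fderiv ℝ g a (1, 0)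

/-- Partial derivative in the direction `(0,1)`. -/
def pv (g : ℝ × ℝ → ℝ) (a : ℝ × ℝ) : ℝ := fderiv ℝ g a (0, 1)

/-- Jacobian determinant `g_u h_v - g_v h_u`. -/
def Jac (g h : ℝ × ℝ → ℝ) (a : ℝ × ℝ) : ℝ := pu g a * pv h a - pv g a * pu h a

lemma key {A B C D c d : ℝ} (hdet : A * D - B * C ≠ 0)
    (h1 : c * A + d * B = 0) (h2 : c * C + d * D = 0) : c = 0 ∧ d = 0 := by
  constructor
  · have : c * (A * D - B * C) = 0 := by linear_combination D * h1 - B * h2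
    exact (mul_eq_zero.1 this).resolve_right hdet
  · have : d * (A * D - B * C) = 0 := by linear_combination A * h2 - C * h1
    exact (mul_eq_zero.1 this).resolve_right hdet

lemma key2 {A B C D : ℝ} (hdet : A * D - B * C = 0) :
    ∃ v : ℝ × ℝ, v ≠ 0 ∧ v.1 * A + v.2 * B = 0 ∧ v.1 * C + v.2 * D = 0 := by
  by_cases hCD : C = 0 ∧ D = 0
  · by_cases hAB : A = 0 ∧ B = 0
    · exact ⟨(1, 0), by simp [Prod.ext_iff], by simp [hAB.1], by simp [hCD.1]⟩
    · refine ⟨(B, -A), ?_, by ring, by rw [hCD.1, hCD.2]; ring⟩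
      simp only [ne_eq, Prod.ext_iff, not_and] at hAB ⊢
      intro hB; simp only [hB] at hAB ⊢; simpa using hAB
  · refine ⟨(D, -C), ?_, by linear_combination hdet, by ring⟩
    simp only [ne_eq, Prod.ext_iff, not_and] at hCD ⊢
    intro hD
    rcases eq_or_ne C 0 with hC | hC
    · exact absurd hC (by intro h'; exact (hCD h') hD)
    · simp [hC]

theorem stmt0 (U : Set (ℝ × ℝ)) (hU : IsOpen U) (h0 : (0 : ℝ × ℝ) ∈ U)
    (x y z p q : ℝ × ℝ → ℝ)
    (hx : ContDiffOn ℝ (⊤ : ℕ∞) x U) (hy : ContDiffOn ℝ (⊤ : ℕ∞) y U)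
    (hz : ContDiffOn ℝ (⊤ : ℕ∞) z U) (hp : ContDiffOn ℝ (⊤ : ℕ∞) p U)
    (hq : ContDiffOn ℝ (⊤ : ℕ∞) q U)
    (hDf : Function.Injective (fderiv ℝ (fun a => (x a, y a, z a, p a, q a)) 0))
    (hcontact : ∀ a ∈ U, pu z a = p a * pu x a + q a * pu y a ∧
      pv z a = p a * pv x a + q a * pv y a)
    (hhess : ∀ a ∈ U, Jac x y a = Jac p q a)
    (h : Function.Injective (fderiv ℝ (fun a => (x a, y a, z a)) 0) ∨
      Function.Injective (fderiv ℝ (fun a => (p a, q a, p a * x a + q a * y a - z a)) 0)) :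
    Function.Injective (fderiv ℝ (fun a => (x a, y a, z a)) 0) ∧
    Function.Injective (fderiv ℝ (fun a => (p a, q a, p a * x a + q a * y a - z a)) 0) := by
  have hmem : U ∈ nhds (0 : ℝ × ℝ) := hU.mem_nhds h0
  have dx : DifferentiableAt ℝ x 0 := (hx.contDiffAt hmem).differentiableAt (by simp)
  have dy : DifferentiableAt ℝ y 0 := (hy.contDiffAt hmem).differentiableAt (by simp)
  have dz : DifferentiableAt ℝ z 0 := (hz.contDiffAt hmem).differentiableAt (by simp)
  have dp : DifferentiableAt ℝ p 0 := (hp.contDiffAt hmem).differentiableAt (by simp)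
  have dq : DifferentiableAt ℝ q 0 := (hq.contDiffAt hmem).differentiableAt (by simp)
  have heval : ∀ (g : ℝ × ℝ → ℝ) (v : ℝ × ℝ),
      fderiv ℝ g 0 v = v.1 * pu g 0 + v.2 * pv g 0 := by
    intro g v
    have hv : v = v.1 • ((1, 0) : ℝ × ℝ) + v.2 • ((0, 1) : ℝ × ℝ) := by
      ext <;> simp
    conv_lhs => rw [hv]
    rw [map_add, map_smul, map_smul]
    simp [pu, pv, smul_eq_mul]
  -- fderiv of the first triple
  have hL1 : ∀ v, fderiv ℝ (fun a => (x a, y a, z a)) 0 v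
      = (fderiv ℝ x 0 v, fderiv ℝ y 0 v, fderiv ℝ z 0 v) := by
    intro v
    rw [HasFDerivAt.fderiv (HasFDerivAt.prodMk dx.hasFDerivAt (HasFDerivAt.prodMk dy.hasFDerivAt dz.hasFDerivAt))]
    rfl
  -- contact at 0, functional form
  obtain ⟨hc1, hc2⟩ := hcontact 0 h0
  have hDz : ∀ v : ℝ × ℝ, fderiv ℝ z 0 v = p 0 * fderiv ℝ x 0 v + q 0 * fderiv ℝ y 0 v := by
    intro v
    rw [heval z, heval x, heval y, hc1, hc2]; ring
  -- fderiv of the second triple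
  have hw : HasFDerivAt (fun a => p a * x a + q a * y a - z a)
      ((p 0 • fderiv ℝ x 0 + x 0 • fderiv ℝ p 0) + (q 0 • fderiv ℝ y 0 + y 0 • fderiv ℝ q 0)
        - fderiv ℝ z 0) 0 :=
    ((dp.hasFDerivAt.mul dx.hasFDerivAt).add (dq.hasFDerivAt.mul dy.hasFDerivAt)).sub
      dz.hasFDerivAt
  have hL2 : ∀ v, fderiv ℝ (fun a => (p a, q a, p a * x a + q a * y a - z a)) 0 v
      = (fderiv ℝ p 0 v, fderiv ℝ q 0 v, x 0 * fderiv ℝ p 0 v + y 0 * fderiv ℝ q 0 v) := by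
    intro v
    rw [HasFDerivAt.fderiv (HasFDerivAt.prodMk dp.hasFDerivAt (HasFDerivAt.prodMk dq.hasFDerivAt hw))]
    simp only [ContinuousLinearMap.prod_apply, ContinuousLinearMap.sub_apply,
      ContinuousLinearMap.add_apply, ContinuousLinearMap.smul_apply, smul_eq_mul, hDz v]
    refine Prod.ext rfl (Prod.ext rfl ?_)
    ring
  have hJ : Jac x y 0 = Jac p q 0 := hhess 0 h0
  have iff1 : Function.Injective (fderiv ℝ (fun a => (x a, y a, z a)) 0) ↔ Jac x y 0 ≠ 0 := by
    constructor
    · intro hinj hJ0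
      obtain ⟨v, hv, h1, h2⟩ := key2 (A := pu x 0) (B := pv x 0) (C := pu y 0) (D := pv y 0)
        (by simpa [Jac] using hJ0)
      apply hv
      apply hinj
      rw [hL1, hDz v, heval x, heval y, h1, h2]
      simp
    · intro hJ0
      rw [injective_iff_map_eq_zero]
      intro v hv
      rw [hL1] at hv
      obtain ⟨e1, e2, _⟩ : fderiv ℝ x 0 v = 0 ∧ fderiv ℝ y 0 v = 0 ∧ fderiv ℝ z 0 v = 0 := by
        simpa [Prod.ext_iff] using hv
      rw [heval] at e1 e2
      obtain ⟨hc, hd⟩ := key (A := pu x 0) (B := pv x 0) (C := pu y 0) (D := pv y 0)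
        (by simpa [Jac] using hJ0) e1 e2
      exact Prod.ext hc hd
  have iff2 : Function.Injective
      (fderiv ℝ (fun a => (p a, q a, p a * x a + q a * y a - z a)) 0) ↔ Jac p q 0 ≠ 0 := by
    constructor
    · intro hinj hJ0
      obtain ⟨v, hv, h1, h2⟩ := key2 (A := pu p 0) (B := pv p 0) (C := pu q 0) (D := pv q 0)
        (by simpa [Jac] using hJ0)
      apply hv
      apply hinj
      rw [hL2, heval p, heval q, h1, h2]
      simp
    · intro hJ0
      rw [injective_iff_map_eq_zero]
      intro v hv
      rw [hL2] at hv
      obtain ⟨e1, e2, _⟩ : fderiv ℝ p 0 v = 0 ∧ fderiv ℝ q 0 v = 0 ∧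
          x 0 * fderiv ℝ p 0 v + y 0 * fderiv ℝ q 0 v = 0 := by
        simpa [Prod.ext_iff] using hv
      rw [heval] at e1 e2
      obtain ⟨hc, hd⟩ := key (A := pu p 0) (B := pv p 0) (C := pu q 0) (D := pv q 0)
        (by simpa [Jac] using hJ0) e1 e2
      exact Prod.ext hc hd
  rcases h with h | h
  · have hJ0 := iff1.1 h
    exact ⟨h, iff2.2 (hJ ▸ hJ0)⟩
  · have hJ0 := iff2.1 h
    exact ⟨iff1.2 (hJ ▸ hJ0), h⟩
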